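/- arXiv:1509.08285 — 2 statements merged into one kernel-verified Lean document; each statement's English description precedes it below -/
import Mathlib

section
/- Let T be a terrain and let g ∈ T be a point with x(g) < x(v_i) that sees some point p ∈ int(e_i). Then g sees every point of the segment [p, v_{i+1}]; in particular g sees v_{i+1}, and V(g) ∩ e_i is a single segment containing v_{i+1}. Symmetrically, if x(g) > x(v_{i+1}) and g sees some point p ∈ int(e_i), then g sees every point of the segment [v_i, p]; in particular g sees v_i, and V(g) ∩ e_i is a single segment containing v_i. -/
/-!
Let `g` lie to the left of `v_i`. A point `q` of `e_i` is visible from `g` exactly when every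
terrain point `t` with `x(g) ≤ x(t) ≤ x(v_i)` lies weakly below the line `gq`: to the right of
`v_i` the terrain is `e_i` itself, which lies below that line between `v_i` and `q`. Each such
condition is a closed half-plane in `q`, so `V(g) ∩ e_i` is a closed convex part of `e_i`. Seeing an
interior point `p` puts `v_i` below the line `gp`, hence `v_{i+1}` above it, so every obstacle below
`gp` is also below `g v_{i+1}`: the convex set contains `v_{i+1}` and is therefore a segment ending
there. The case of `g` to the right of `v_{i+1}` is the mirror image under `x ↦ -x`.
-/

open Set

/-- A terrain: `n ≥ 2` vertices `v 0, …, v (n-1)` in `ℝ²` with strictly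
increasing `x`-coordinates. -/
structure Terrain where
  n : ℕ
  hn : 2 ≤ n
  v : ℕ → ℝ × ℝ
  mono : ∀ i j : ℕ, i < j → j < n → (v i).1 < (v j).1

namespace Terrain

/-- The edge `e_i = [v_i, v_{i+1}]` (meaningful for `i + 1 < n`). -/
def edge (T : Terrain) (i : ℕ) : Set (ℝ × ℝ) := segment ℝ (T.v i) (T.v (i + 1))

/-- The terrain as a subset of `ℝ²`: the union of its edges. -/
def carrier (T : Terrain) : Set (ℝ × ℝ) := ⋃ i ∈ Finset.range (T.n - 1), T.edge i

/-- The interior of the edge `e_i`: the edge minus its two endpoints. -/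
def intEdge (T : Terrain) (i : ℕ) : Set (ℝ × ℝ) := T.edge i \ {T.v i, T.v (i + 1)}

/-- `p` sees `q` iff every point of the segment `[p, q]` is nowhere strictly below
the terrain, i.e. every point of the segment lies on or above the terrain point
with the same `x`-coordinate. -/
def sees (T : Terrain) (p q : ℝ × ℝ) : Prop :=
  ∀ z ∈ segment ℝ p q, ∀ t ∈ T.carrier, t.1 = z.1 → t.2 ≤ z.2

/-- The visibility region `V(p) = {q ∈ T : p sees q}`. -/
def vis (T : Terrain) (p : ℝ × ℝ) : Set (ℝ × ℝ) := {q ∈ T.carrier | T.sees p q}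

/-- `V(C) = ⋃_{g ∈ C} V(g)`. -/
def visSet (T : Terrain) (C : Set (ℝ × ℝ)) : Set (ℝ × ℝ) := ⋃ g ∈ C, T.vis g

/-- `C ⊆ T` is a cover of the terrain iff `V(C) = T`. -/
def IsCover (T : Terrain) (C : Set (ℝ × ℝ)) : Prop :=
  C ⊆ T.carrier ∧ T.visSet C = T.carrier

/-- The vertex set `V = {v_1, …, v_n}`. -/
def vertexSet (T : Terrain) : Set (ℝ × ℝ) := {p | ∃ i < T.n, p = T.v i}

/-- Edge `e_i` is critical w.r.t. `g ∈ C`: `C \ {g}` covers some part of,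
but not all of, `int(e_i)`. -/
def IsCriticalWrt (T : Terrain) (C : Set (ℝ × ℝ)) (g : ℝ × ℝ) (i : ℕ) : Prop :=
  (T.visSet (C \ {g}) ∩ T.intEdge i).Nonempty ∧ ¬ T.intEdge i ⊆ T.visSet (C \ {g})

/-- `g` is a left-guard of `e_i`: `x(g) < x(v_i)` and `e_i` is critical w.r.t. `g`. -/
def IsLeftGuard (T : Terrain) (C : Set (ℝ × ℝ)) (g : ℝ × ℝ) (i : ℕ) : Prop :=
  g.1 < (T.v i).1 ∧ T.IsCriticalWrt C g i

/-- `g` is a right-guard of `e_i`: `x(v_{i+1}) < x(g)` and `e_i` is critical w.r.t. `g`. -/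
def IsRightGuard (T : Terrain) (C : Set (ℝ × ℝ)) (g : ℝ × ℝ) (i : ℕ) : Prop :=
  (T.v (i + 1)).1 < g.1 ∧ T.IsCriticalWrt C g i

/-- `q` is extremal in `V(p)`: `q ∈ V(p)` and `q` has maximal or minimal
`x`-coordinate within its connected component of `V(p)`. -/
def Extremal (T : Terrain) (p q : ℝ × ℝ) : Prop :=
  q ∈ T.vis p ∧
    ((∀ r ∈ connectedComponentIn (T.vis p) q, r.1 ≤ q.1) ∨
     (∀ r ∈ connectedComponentIn (T.vis p) q, q.1 ≤ r.1))

/-- The guard candidate set `U`: all vertices together with the extremal points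
of the vertices' visibility regions. -/
def Uset (T : Terrain) : Set (ℝ × ℝ) :=
  T.vertexSet ∪ ⋃ i ∈ Finset.range T.n, {q | T.Extremal (T.v i) q}

/-- `OPT(G, W)`: the minimum cardinality of a finite `C ⊆ G` with `W ⊆ V(C)`. -/
noncomputable def OPT (T : Terrain) (G W : Set (ℝ × ℝ)) : ℕ :=
  sInf {k | ∃ C : Finset (ℝ × ℝ), ↑C ⊆ G ∧ W ⊆ T.visSet ↑C ∧ C.card = k}

end Terrain

theorem exists_segment_inter_eq_segment {E : Type*} [AddCommGroup E] [Module ℝ E]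
    [TopologicalSpace E] [IsTopologicalAddGroup E] [ContinuousSMul ℝ E]
    {C : Set E} (x : E) {y : E} (hC : IsClosed C) (hCv : Convex ℝ C) (hy : y ∈ C) :
    ∃ a ∈ segment ℝ x y, segment ℝ x y ∩ C = segment ℝ a y := by
  set f := AffineMap.lineMap (k := ℝ) x y
  set U := Icc (0 : ℝ) 1 ∩ f ⁻¹' C
  have hU0 : BddBelow U := ⟨0, fun u hu => hu.1.1⟩
  have hU1 : (1 : ℝ) ∈ U := ⟨right_mem_Icc.2 zero_le_one, by simpa [f] using hy⟩
  set a := sInf U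
  have haU : a ∈ U :=
    (isClosed_Icc.inter (hC.preimage AffineMap.lineMap_continuous)).csInf_mem ⟨1, hU1⟩ hU0
  have hU : U = Icc a 1 :=
    Subset.antisymm (fun u hu => ⟨csInf_le hU0 hu, hu.1.2⟩)
      (((convex_Icc 0 1).inter (hCv.affine_preimage f)).ordConnected.out haU hU1)
  refine ⟨f a, segment_eq_image_lineMap ℝ x y ▸ mem_image_of_mem f haU.1, ?_⟩
  calc segment ℝ x y ∩ C = f '' U := by rw [segment_eq_image_lineMap, image_inter_preimage]
    _ = f '' segment ℝ a 1 := by rw [hU, segment_eq_Icc haU.1.2]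
    _ = segment ℝ (f a) y := by rw [image_segment, AffineMap.lineMap_apply_one]

namespace Terrain

/-- For `0 < u.1` and `0 < v.1`, `0 ≤ cross u v` says that `u` points weakly below `v`. -/
def cross (u v : ℝ × ℝ) : ℝ := u.1 * v.2 - u.2 * v.1

/-- Visibility over an arbitrary obstacle set; `T.sees` is `SeesOver T.carrier`. -/
def SeesOver (S : Set (ℝ × ℝ)) (p q : ℝ × ℝ) : Prop :=
  ∀ z ∈ segment ℝ p q, ∀ t ∈ S, t.1 = z.1 → t.2 ≤ z.2

section Plane

variable {S : Set (ℝ × ℝ)} {b c g p q t w z : ℝ × ℝ}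

theorem image_fst_segment (h : p.1 ≤ q.1) : Prod.fst '' segment ℝ p q = Icc p.1 q.1 := by
  simpa [segment_eq_Icc h] using image_segment ℝ (LinearMap.fst ℝ ℝ ℝ).toAffineMap p q

theorem fst_mem_Icc_of_mem_segment (h : p.1 ≤ q.1) (hz : z ∈ segment ℝ p q) :
    z.1 ∈ Icc p.1 q.1 :=
  image_fst_segment h ▸ mem_image_of_mem _ hz

theorem eq_right_of_mem_segment_of_fst_eq (h : p.1 ≠ q.1) (hz : z ∈ segment ℝ p q)
    (hzq : z.1 = q.1) : z = q := by
  obtain ⟨α, β, -, -, hαβ, rfl⟩ := hz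
  obtain rfl : α = 0 := by
    have : α * (p.1 - q.1) = 0 := by
      simp only [Prod.fst_add, Prod.smul_fst, smul_eq_mul] at hzq
      linear_combination hzq - q.1 * hαβ
    simpa [sub_ne_zero.2 h] using this
  simp_all

theorem cross_sub_eq_mul_of_mem_segment (hw : w ∈ segment ℝ g q) (ht : t.1 = w.1) :
    cross (t - g) (q - g) = (q.1 - g.1) * (w.2 - t.2) := by
  obtain ⟨α, β, -, -, hαβ, rfl⟩ := hw
  simp only [Prod.fst_add, Prod.smul_fst, smul_eq_mul] at ht
  simp only [cross, Prod.fst_sub, Prod.snd_sub, Prod.snd_add, Prod.smul_snd, smul_eq_mul]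
  linear_combination (q.2 - g.2) * ht + (g.1 * q.2 - g.2 * q.1) * hαβ

theorem cross_lineMap_sub (α β : ℝ) :
    cross (AffineMap.lineMap b c α - g) (AffineMap.lineMap b c β - g) =
      (β - α) * cross (b - g) (c - g) := by
  simp only [cross, AffineMap.lineMap_apply_module, Prod.fst_sub, Prod.snd_sub, Prod.fst_add,
    Prod.snd_add, Prod.smul_fst, Prod.smul_snd, smul_eq_mul]
  ring

theorem cross_nonneg_trans {a P C : ℝ × ℝ} (ha : 0 ≤ a.1) (hP : 0 < P.1) (hC : 0 ≤ C.1)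
    (haP : 0 ≤ cross a P) (hPC : 0 ≤ cross P C) : 0 ≤ cross a C := by
  have : P.1 * cross a C = a.1 * cross P C + C.1 * cross a P := by simp only [cross]; ring
  exact (mul_nonneg_iff_of_pos_left hP).1 (this ▸ by positivity)

theorem isClosed_setOf_cross_sub_nonneg (u g : ℝ × ℝ) :
    IsClosed {q : ℝ × ℝ | 0 ≤ cross u (q - g)} :=
  isClosed_le continuous_const (by unfold cross; fun_prop)

theorem convex_setOf_cross_sub_nonneg (u g : ℝ × ℝ) :
    Convex ℝ {q : ℝ × ℝ | 0 ≤ cross u (q - g)} := by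
  intro x hx y hy α β hα hβ hαβ
  have : cross u (α • x + β • y - g) = α * cross u (x - g) + β * cross u (y - g) := by
    simp only [cross, Prod.fst_sub, Prod.snd_sub, Prod.fst_add, Prod.snd_add, Prod.smul_fst,
      Prod.smul_snd, smul_eq_mul]
    linear_combination (u.1 * g.2 - u.2 * g.1) * hαβ
  show 0 ≤ cross u _
  rw [this]
  exact add_nonneg (mul_nonneg hα hx) (mul_nonneg hβ hy)

theorem cross_nonneg_of_seesOver (hgq : g.1 < q.1) (h : SeesOver S g q) (ht : t ∈ S)
    (hgt : g.1 ≤ t.1) (htq : t.1 ≤ q.1) : 0 ≤ cross (t - g) (q - g) := by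
  obtain ⟨w, hw, hwt⟩ : t.1 ∈ Prod.fst '' segment ℝ g q := image_fst_segment hgq.le ▸ ⟨hgt, htq⟩
  rw [cross_sub_eq_mul_of_mem_segment hw hwt.symm]
  exact mul_nonneg (sub_nonneg.2 hgq.le) (sub_nonneg.2 (h w hw t ht hwt.symm))

theorem cross_nonneg_of_mem_segment (hbc : b.1 < c.1) (hX : 0 ≤ cross (b - g) (c - g))
    (ht : t ∈ segment ℝ b c) (hq : q ∈ segment ℝ b c) (htq : t.1 ≤ q.1) :
    0 ≤ cross (t - g) (q - g) := by
  rw [segment_eq_image_lineMap] at ht hq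
  obtain ⟨α, -, rfl⟩ := ht
  obtain ⟨β, -, rfl⟩ := hq
  have hαβ : α ≤ β := by
    simp only [AffineMap.lineMap_apply_module, Prod.fst_add, Prod.smul_fst, smul_eq_mul] at htq
    nlinarith
  rw [cross_lineMap_sub]
  exact mul_nonneg (sub_nonneg.2 hαβ) hX

theorem cross_nonneg_of_cross_nonneg_of_mem_segment (hp : p ∈ segment ℝ b c) (hpb : p ≠ b)
    (h : 0 ≤ cross (b - g) (p - g)) : 0 ≤ cross (b - g) (c - g) := by
  rw [segment_eq_image_lineMap] at hp
  obtain ⟨β, hβ, rfl⟩ := hp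
  have hβ0 : 0 < β := hβ.1.lt_of_ne (by rintro rfl; simp at hpb)
  have hb := cross_lineMap_sub (b := b) (c := c) (g := g) 0 β
  rw [AffineMap.lineMap_apply_zero, sub_zero] at hb
  rw [hb] at h
  exact (mul_nonneg_iff_of_pos_left hβ0).1 h

/-- Beyond `b` every obstacle lies on `[b, q]`, which is below the line `gq` because `b` is. -/
theorem seesOver_of_forall_cross_nonneg (hgb : g.1 < b.1) (hbc : b.1 < c.1)
    (hS : ∀ t ∈ S, b.1 ≤ t.1 → t.1 ≤ c.1 → t ∈ segment ℝ b c)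
    (hX : 0 ≤ cross (b - g) (c - g)) (hq : q ∈ segment ℝ b c)
    (h : ∀ t ∈ S, g.1 ≤ t.1 → t.1 ≤ b.1 → 0 ≤ cross (t - g) (q - g)) : SeesOver S g q := by
  have hbq := fst_mem_Icc_of_mem_segment hbc.le hq
  have hgq : g.1 < q.1 := hgb.trans_le hbq.1
  intro w hw t ht htw
  have hgw := fst_mem_Icc_of_mem_segment hgq.le hw
  have key : 0 ≤ cross (t - g) (q - g) := by
    rcases le_or_gt t.1 b.1 with htb | hbt
    · exact h t ht (htw ▸ hgw.1) htb
    · exact cross_nonneg_of_mem_segment hbc hX (hS t ht hbt.le (by linarith [hgw.2, hbq.2]))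
        hq (htw ▸ hgw.2)
  rw [cross_sub_eq_mul_of_mem_segment hw htw, mul_nonneg_iff_of_pos_left (sub_pos.2 hgq)] at key
  exact sub_nonneg.1 key

theorem seesOver_segment_of_seesOver_left (hgb : g.1 < b.1) (hbc : b.1 < c.1) (hb : b ∈ S)
    (hS : ∀ t ∈ S, b.1 ≤ t.1 → t.1 ≤ c.1 → t ∈ segment ℝ b c)
    (hp : p ∈ segment ℝ b c) (hpb : p ≠ b) (hgp : SeesOver S g p) :
    (∀ z ∈ segment ℝ p c, SeesOver S g z) ∧
      ∃ a ∈ segment ℝ b c, {q ∈ segment ℝ b c | SeesOver S g q} = segment ℝ a c := by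
  set H := ⋂ t ∈ {t ∈ S | g.1 ≤ t.1 ∧ t.1 ≤ b.1}, {q : ℝ × ℝ | 0 ≤ cross (t - g) (q - g)}
  have hbp := fst_mem_Icc_of_mem_segment hbc.le hp
  have hgp₁ : g.1 < p.1 := hgb.trans_le hbp.1
  have hX : 0 ≤ cross (b - g) (c - g) :=
    cross_nonneg_of_cross_nonneg_of_mem_segment hp hpb
      (cross_nonneg_of_seesOver hgp₁ hgp hb hgb.le hbp.1)
  have mem_H_iff : ∀ q ∈ segment ℝ b c, SeesOver S g q ↔ q ∈ H := fun q hq => by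
    have hbq := fst_mem_Icc_of_mem_segment hbc.le hq
    simp only [H, mem_iInter₂, mem_ofPred_eq]
    exact ⟨fun h t ⟨ht, hgt, htb⟩ => cross_nonneg_of_seesOver (hgb.trans_le hbq.1) h ht hgt
      (htb.trans hbq.1), fun h => seesOver_of_forall_cross_nonneg hgb hbc hS hX hq
      fun t ht hgt htb => h t ⟨ht, hgt, htb⟩⟩
  have hpH := mem_iInter₂.1 ((mem_H_iff p hp).1 hgp)
  have hcH : c ∈ H := mem_iInter₂.2 fun t ⟨ht, hgt, htb⟩ =>
    cross_nonneg_trans (sub_nonneg.2 hgt) (sub_pos.2 hgp₁) (sub_nonneg.2 (hgb.trans hbc).le)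
      (hpH t ⟨ht, hgt, htb⟩)
      (cross_nonneg_of_mem_segment hbc hX hp (right_mem_segment ℝ b c) hbp.2)
  obtain ⟨a, ha, hHa⟩ := exists_segment_inter_eq_segment b
    (isClosed_biInter fun t _ => isClosed_setOf_cross_sub_nonneg _ g)
    (convex_iInter₂ fun t _ => convex_setOf_cross_sub_nonneg _ g) hcH
  have hK : {q ∈ segment ℝ b c | SeesOver S g q} = segment ℝ a c := by
    rw [← hHa]
    ext q
    exact and_congr_right (mem_H_iff q)
  have hpK : p ∈ segment ℝ a c := hK ▸ ⟨hp, hgp⟩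
  refine ⟨fun z hz => ?_, a, ha, hK⟩
  have hz' := (convex_segment a c).segment_subset hpK (right_mem_segment ℝ a c) hz
  rw [← hK] at hz'
  exact hz'.2

def reflect : (ℝ × ℝ) ≃ₗ[ℝ] ℝ × ℝ := (LinearEquiv.neg ℝ).prodCongr (LinearEquiv.refl ℝ ℝ)

@[simp]
theorem reflect_apply (p : ℝ × ℝ) : reflect p = (-p.1, p.2) := rfl

theorem segment_reflect (p q : ℝ × ℝ) :
    segment ℝ (reflect p) (reflect q) = reflect '' segment ℝ p q :=
  (image_segment ℝ (reflect : (ℝ × ℝ) →ₗ[ℝ] ℝ × ℝ).toAffineMap p q).symm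

theorem reflect_mem_segment_iff :
    reflect z ∈ segment ℝ (reflect p) (reflect q) ↔ z ∈ segment ℝ p q := by
  rw [segment_reflect]
  exact reflect.injective.mem_set_image

theorem seesOver_reflect_iff :
    SeesOver (reflect '' S) (reflect p) (reflect q) ↔ SeesOver S p q := by
  rw [SeesOver, SeesOver, segment_reflect]
  simp only [forall_mem_image, reflect_apply, neg_inj]

theorem seesOver_segment_of_seesOver_right (hbg : b.1 < g.1) (hcb : c.1 < b.1) (hb : b ∈ S)
    (hS : ∀ t ∈ S, c.1 ≤ t.1 → t.1 ≤ b.1 → t ∈ segment ℝ b c)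
    (hp : p ∈ segment ℝ b c) (hpb : p ≠ b) (hgp : SeesOver S g p) :
    (∀ z ∈ segment ℝ p c, SeesOver S g z) ∧
      ∃ a ∈ segment ℝ b c, {q ∈ segment ℝ b c | SeesOver S g q} = segment ℝ a c := by
  have hS' : ∀ t ∈ reflect '' S, (reflect b).1 ≤ t.1 → t.1 ≤ (reflect c).1 →
      t ∈ segment ℝ (reflect b) (reflect c) := by
    rintro _ ⟨t, ht, rfl⟩ h₁ h₂
    simp only [reflect_apply, neg_le_neg_iff] at h₁ h₂
    exact reflect_mem_segment_iff.2 (hS t ht h₂ h₁)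
  obtain ⟨hseg, a, ha, hK⟩ := seesOver_segment_of_seesOver_left (g := reflect g)
    (by simpa using hbg) (by simpa using hcb) (mem_image_of_mem _ hb) hS'
    (reflect_mem_segment_iff.2 hp) (reflect.injective.ne hpb) (seesOver_reflect_iff.2 hgp)
  obtain ⟨a, rfl⟩ := reflect.surjective a
  refine ⟨fun z hz => seesOver_reflect_iff.1 (hseg _ (reflect_mem_segment_iff.2 hz)), a,
    reflect_mem_segment_iff.1 ha, ?_⟩
  ext q
  simpa only [mem_ofPred_eq, reflect_mem_segment_iff, seesOver_reflect_iff] using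
    Set.ext_iff.1 hK (reflect q)

end Plane

variable (T : Terrain) {i : ℕ}

theorem edge_subset_carrier (hi : i + 1 < T.n) : T.edge i ⊆ T.carrier :=
  subset_biUnion_of_mem (u := T.edge) (by simp only [Finset.coe_range, mem_Iio]; omega)

theorem mem_edge_of_mem_carrier (hi : i + 1 < T.n) {t : ℝ × ℝ} (ht : t ∈ T.carrier)
    (h₁ : (T.v i).1 ≤ t.1) (h₂ : t.1 ≤ (T.v (i + 1)).1) : t ∈ T.edge i := by
  have hmono : StrictMonoOn (fun k => (T.v k).1) (Iio T.n) := fun j _ k hk hjk => T.mono j k hjk hk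
  obtain ⟨j, hj, htj⟩ := mem_iUnion₂.1 ht
  simp only [Finset.mem_range] at hj
  have hj' : j + 1 < T.n := by omega
  have hlt := T.mono j (j + 1) j.lt_succ_self hj'
  have htx := fst_mem_Icc_of_mem_segment hlt.le htj
  rcases lt_trichotomy j i with hji | rfl | hij
  · have hx : (T.v (j + 1)).1 = (T.v i).1 :=
      le_antisymm ((hmono.le_iff_le hj' (mem_Iio.2 (by omega))).2 hji) (h₁.trans htx.2)
    obtain rfl : j + 1 = i := hmono.injOn hj' (show i < T.n by omega) hx
    rw [eq_right_of_mem_segment_of_fst_eq hlt.ne htj (htx.2.antisymm h₁)]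
    exact left_mem_segment ℝ _ _
  · exact htj
  · have hx : (T.v (i + 1)).1 = (T.v j).1 :=
      le_antisymm ((hmono.le_iff_le hi (mem_Iio.2 (by omega))).2 hij) (htx.1.trans h₂)
    obtain rfl : i + 1 = j := hmono.injOn hi (show j < T.n by omega) hx
    rw [edge, segment_symm] at htj
    rw [eq_right_of_mem_segment_of_fst_eq hlt.ne' htj (le_antisymm h₂ htx.1)]
    exact right_mem_segment ℝ _ _

theorem vis_inter_edge (hi : i + 1 < T.n) (g : ℝ × ℝ) :
    T.vis g ∩ T.edge i = {q ∈ T.edge i | T.sees g q} := by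
  ext q
  exact ⟨fun ⟨⟨_, hs⟩, he⟩ => ⟨he, hs⟩, fun ⟨he, hs⟩ => ⟨⟨T.edge_subset_carrier hi he, hs⟩, he⟩⟩

end Terrain

open Terrain

/-- If `g ∈ T` with `x(g) < x(v_i)` sees some `p ∈ int(e_i)`, then `g`
sees every point of `[p, v_{i+1}]`, in particular `v_{i+1}`, and `V(g) ∩ e_i` is a
single segment containing `v_{i+1}`; and symmetrically for `x(g) > x(v_{i+1})`. -/
theorem single_interval_visibility (T : Terrain) (i : ℕ) (hi : i + 1 < T.n) :
    (∀ g ∈ T.carrier, g.1 < (T.v i).1 → ∀ p ∈ T.intEdge i, T.sees g p →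
      (∀ z ∈ segment ℝ p (T.v (i + 1)), T.sees g z) ∧
      T.sees g (T.v (i + 1)) ∧
      ∃ a ∈ T.edge i, T.vis g ∩ T.edge i = segment ℝ a (T.v (i + 1))) ∧
    (∀ g ∈ T.carrier, (T.v (i + 1)).1 < g.1 → ∀ p ∈ T.intEdge i, T.sees g p →
      (∀ z ∈ segment ℝ (T.v i) p, T.sees g z) ∧
      T.sees g (T.v i) ∧
      ∃ a ∈ T.edge i, T.vis g ∩ T.edge i = segment ℝ (T.v i) a) := by
  have hlt : (T.v i).1 < (T.v (i + 1)).1 := T.mono i (i + 1) i.lt_succ_self hi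
  have hvi : T.v i ∈ T.carrier := T.edge_subset_carrier hi (left_mem_segment ℝ _ _)
  have hvi₁ : T.v (i + 1) ∈ T.carrier := T.edge_subset_carrier hi (right_mem_segment ℝ _ _)
  have hS : ∀ t ∈ T.carrier, (T.v i).1 ≤ t.1 → t.1 ≤ (T.v (i + 1)).1 → t ∈ T.edge i :=
    fun t ht => T.mem_edge_of_mem_carrier hi ht
  refine ⟨fun g _ hg p ⟨hpe, hpv⟩ hgp => ?_, fun g _ hg p ⟨hpe, hpv⟩ hgp => ?_⟩ <;>
    simp only [mem_insert_iff, mem_singleton_iff, not_or] at hpv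
  · obtain ⟨hseg, a, ha, hK⟩ := seesOver_segment_of_seesOver_left hg hlt hvi hS hpe hpv.1 hgp
    exact ⟨hseg, hseg _ (right_mem_segment ℝ _ _), a, ha, (T.vis_inter_edge hi g).trans hK⟩
  · rw [edge, segment_symm] at hpe hS
    obtain ⟨hseg, a, ha, hK⟩ := seesOver_segment_of_seesOver_right hg hlt hvi₁ hS hpe hpv.2 hgp
    rw [segment_symm] at hseg ha hK
    refine ⟨hseg, hseg _ (left_mem_segment ℝ _ _), a, ha, ?_⟩
    exact (T.vis_inter_edge hi g).trans (hK.trans (segment_symm ℝ a _))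
end

section
/- Let T be a terrain with n vertices and let G ⊆ T be a finite set of guard candidates with V(G) = T. Then there exists a finite set W ⊆ T with |W| ≤ 4·n·|G| + 1 such that: (i) for every point w ∈ T there exists w' ∈ W with {g ∈ G : g sees w'} ⊆ {g ∈ G : g sees w}; (ii) every C ⊆ G with W ⊆ V(C) satisfies V(C) = T (i.e., every set feasible for TGP(G, W) is feasible for TGP(G, T)); and (iii) OPT(G, W) = OPT(G, T). -/
open Set

/-!
Over an edge `e_i`, the abscissae of the points seen by a guard `g ∈ T` form a closed interval.
If `g` lies over `e_i` it sees all of `e_i`. Otherwise, say `x(g) ≤ x(v_i)`, the point over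
`x ∈ [x(v_i), x(v_{i+1})]` is seen iff the terrain stays below the chord from `g`; since the
terrain is affine over the edge, this is, for each abscissa `u` between `x(g)` and `x(v_i)`, an
affine inequality in `x`. The case `x(v_{i+1}) ≤ x(g)` is the mirror image.
Cutting `[x(v_1), x(v_n)]` at the vertices and at the at most `2(n-1)|G|` endpoints of these
intervals leaves at most `n(2|G|+1) - 1` cells, and a guard seeing the midpoint of a cell sees the
whole closed cell. The points of `T` over the midpoints are the witnesses; (ii) and (iii) follow
from (i).
-/

/-- `(a, f a)` sees `(x, f x)` over the graph of `f`. -/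
def GraphSees (f : ℝ → ℝ) (a x : ℝ) : Prop :=
  ∀ s ∈ Icc (0 : ℝ) 1, f (a + s * (x - a)) ≤ f a + s * (f x - f a)

namespace GraphSees

variable {f : ℝ → ℝ} {a x c d α β : ℝ}

theorem comp_neg_iff : GraphSees (fun u => f (-u)) (-a) (-x) ↔ GraphSees f a x := by
  refine forall₂_congr fun s _ => ?_
  dsimp only
  rw [show -(-a + s * (-x - -a)) = a + s * (x - a) by ring, neg_neg, neg_neg]

theorem iff_of_lt (hax : a < x) :
    GraphSees f a x ↔ ∀ u ∈ Icc a x, (f u - f a) * (x - a) ≤ (u - a) * (f x - f a) := by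
  have hxa : 0 < x - a := sub_pos.2 hax
  constructor
  · intro h u hu
    have hs : (u - a) / (x - a) ∈ Icc (0 : ℝ) 1 :=
      ⟨div_nonneg (by linarith [hu.1]) hxa.le, (div_le_one hxa).2 (by linarith [hu.2])⟩
    have := h _ hs
    rw [div_mul_cancel₀ _ hxa.ne', add_sub_cancel] at this
    have key := mul_le_mul_of_nonneg_right this hxa.le
    field_simp at key
    linarith
  · intro h s hs
    have hu : a + s * (x - a) ∈ Icc a x := ⟨by nlinarith [hs.1], by nlinarith [hs.2]⟩
    have := h _ hu
    rw [add_sub_cancel_left] at this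
    nlinarith

theorem of_mem_Icc (hf : ∀ u ∈ Icc c d, f u = α + β * u) (ha : a ∈ Icc c d) (hx : x ∈ Icc c d) :
    GraphSees f a x := by
  intro s hs
  have hu : a + s * (x - a) ∈ Icc c d :=
    (convex_Icc c d).add_smul_sub_mem ha hx hs
  rw [hf _ hu, hf a ha, hf x hx]
  linarith

theorem setOf_eq_of_le (hf : ∀ u ∈ Icc c d, f u = α + β * u) (hac : a ≤ c) :
    {x ∈ Icc c d | GraphSees f a x} =
      Icc c d ∩ ⋂ u ∈ Icc a c, {x | (f u - f a) * (x - a) ≤ (u - a) * (α + β * x - f a)} := by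
  ext x
  simp only [mem_ofPred_eq, mem_inter_iff, mem_iInter]
  refine and_congr_right fun hx => ?_
  rcases (hac.trans hx.1).eq_or_lt with rfl | hax
  · obtain rfl : c = a := le_antisymm hx.1 hac
    refine ⟨fun _ u hu => ?_, fun _ s _ => by simp⟩
    obtain rfl : u = c := le_antisymm hu.2 hu.1
    simp
  rw [iff_of_lt hax, hf x hx]
  refine ⟨fun h u hu => h u ⟨hu.1, hu.2.trans hx.1⟩, fun h u hu => ?_⟩
  rcases le_total u c with huc | hcu
  · exact h u ⟨hu.1, huc⟩
  have hc := h c ⟨hac, le_rfl⟩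
  rw [hf c ⟨le_rfl, hx.1.trans hx.2⟩] at hc
  rw [hf u ⟨hcu, hu.2.trans hx.2⟩]
  rcases (hcu.trans hu.2).lt_or_eq with hcx | hcx
  · nlinarith [mul_nonneg (sub_nonneg.2 hu.2) (sub_nonneg.2 hc), sub_pos.2 hcx]
  · rwa [le_antisymm (hu.2.trans_eq hcx.symm) hcu]

theorem isClosed_ordConnected_of_le (hf : ∀ u ∈ Icc c d, f u = α + β * u) (hac : a ≤ c) :
    IsClosed {x ∈ Icc c d | GraphSees f a x} ∧ {x ∈ Icc c d | GraphSees f a x}.OrdConnected := by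
  rw [setOf_eq_of_le hf hac]
  refine ⟨isClosed_Icc.inter <| isClosed_biInter fun u _ => isClosed_le (by fun_prop) (by fun_prop),
    ordConnected_Icc.inter <| ordConnected_biInter fun u _ => ⟨fun x hx y hy z hz => ?_⟩⟩
  rcases (hz.1.trans hz.2).lt_or_eq with hxy | hxy
  · have hx' : (f u - f a) * (x - a) ≤ (u - a) * (α + β * x - f a) := hx
    have hy' : (f u - f a) * (y - a) ≤ (u - a) * (α + β * y - f a) := hy
    show (f u - f a) * (z - a) ≤ (u - a) * (α + β * z - f a)
    nlinarith [mul_le_mul_of_nonneg_left hx' (sub_nonneg.2 hz.2),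
      mul_le_mul_of_nonneg_left hy' (sub_nonneg.2 hz.1), sub_pos.2 hxy]
  · rwa [le_antisymm (hz.2.trans_eq hxy.symm) hz.1]

theorem isClosed_ordConnected (hf : ∀ u ∈ Icc c d, f u = α + β * u) (a : ℝ) :
    IsClosed {x ∈ Icc c d | GraphSees f a x} ∧ {x ∈ Icc c d | GraphSees f a x}.OrdConnected := by
  rcases le_or_gt a c with hac | hca
  · exact isClosed_ordConnected_of_le hf hac
  rcases le_or_gt d a with hda | had
  · have hf' : ∀ u ∈ Icc (-d) (-c), f (-u) = α + -β * u := fun u hu => by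
      rw [hf (-u) ⟨le_neg.2 hu.2, neg_le.2 hu.1⟩]; ring
    have hS : {x ∈ Icc c d | GraphSees f a x} =
        Neg.neg ⁻¹' {x ∈ Icc (-d) (-c) | GraphSees (fun u => f (-u)) (-a) x} := by
      ext x
      simp only [mem_ofPred_eq, mem_preimage, mem_Icc, neg_le_neg_iff, comp_neg_iff]
      tauto
    obtain ⟨hcl, hoc⟩ := isClosed_ordConnected_of_le hf' (neg_le_neg hda)
    rw [hS]
    exact ⟨hcl.preimage continuous_neg, hoc.preimage_anti fun _ _ => neg_le_neg⟩
  · have hS : {x ∈ Icc c d | GraphSees f a x} = Icc c d :=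
      sep_eq_self_iff_mem_true.2 fun x hx => of_mem_Icc hf ⟨hca.le, had.le⟩ hx
    rw [hS]
    exact ⟨isClosed_Icc, ordConnected_Icc⟩

end GraphSees

theorem Icc_subset_of_csInf_csSup_notMem_Ioo {S : Set ℝ} (hc : IsClosed S) (ho : S.OrdConnected)
    (hb : BddBelow S) (ha : BddAbove S) {b b' m : ℝ} (hm : m ∈ S) (hmb : m ∈ Ioo b b')
    (hinf : sInf S ∉ Ioo b b') (hsup : sSup S ∉ Ioo b b') : Icc b b' ⊆ S := by
  have hne : S.Nonempty := ⟨m, hm⟩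
  have hinf_le : sInf S ≤ b := not_lt.1 fun h => hinf ⟨h, (csInf_le hb hm).trans_lt hmb.2⟩
  have hsup_ge : b' ≤ sSup S := not_lt.1 fun h => hsup ⟨hmb.1.trans_le (le_csSup ha hm), h⟩
  exact (Icc_subset_Icc hinf_le hsup_ge).trans (ho.out (hc.csInf_mem hne hb) (hc.csSup_mem hne ha))

theorem exists_gap_midpoints (B : Finset ℝ) :
    ∃ M : Finset ℝ, M.card ≤ B.card - 1 ∧ (∀ m ∈ M, ∃ b ∈ B, ∃ b' ∈ B, m ∈ Icc b b') ∧
      ∀ b₀ ∈ B, ∀ b₁ ∈ B, b₀ < b₁ → ∀ x ∈ Icc b₀ b₁, ∃ b ∈ B, ∃ b' ∈ B, b < b' ∧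
        x ∈ Icc b b' ∧ (b + b') / 2 ∈ M ∧ ∀ c ∈ B, c ∉ Ioo b b' := by
  induction B using Finset.induction_on_max with
  | empty => exact ⟨∅, by simp, by simp, by simp⟩
  | insert a s has ih =>
    rcases s.eq_empty_or_nonempty with rfl | hs
    · refine ⟨∅, by simp, by simp, ?_⟩
      simp only [insert_empty_eq, Finset.mem_singleton]
      rintro _ rfl _ rfl h
      exact absurd h (lt_irrefl _)
    obtain ⟨M, hcard, hM, hgap⟩ := ih
    set t := s.max' hs
    have ht : t ∈ s := s.max'_mem hs
    have hta : t < a := has t ht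
    refine ⟨insert ((t + a) / 2) M, ?_, ?_, ?_⟩
    · rw [Finset.card_insert_of_notMem fun h => (has a h).false]
      have := hs.card_pos
      have := M.card_insert_le ((t + a) / 2)
      omega
    · refine Finset.forall_mem_insert _ _ _ |>.2 ⟨⟨t, Finset.mem_insert_of_mem ht, a,
        Finset.mem_insert_self a s, by constructor <;> linarith⟩, fun m hm => ?_⟩
      obtain ⟨b, hb, b', hb', hmb⟩ := hM m hm
      exact ⟨b, Finset.mem_insert_of_mem hb, b', Finset.mem_insert_of_mem hb', hmb⟩
    intro b₀ hb₀ b₁ hb₁ h01 x hx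
    have hb₁a : b₁ ≤ a := (Finset.mem_insert.1 hb₁).elim (·.le) fun h => (has _ h).le
    have hb₀s : b₀ ∈ s := (Finset.mem_insert.1 hb₀).resolve_left (h01.trans_le hb₁a).ne
    rcases lt_or_ge x t with hxt | htx
    · obtain ⟨b, hb, b', hb', hbb', hxbb', hmid, hfree⟩ :=
        hgap b₀ hb₀s t ht (hx.1.trans_lt hxt) x ⟨hx.1, hxt.le⟩
      refine ⟨b, Finset.mem_insert_of_mem hb, b', Finset.mem_insert_of_mem hb', hbb', hxbb',
        Finset.mem_insert_of_mem hmid, Finset.forall_mem_insert _ _ _ |>.2 ⟨?_, hfree⟩⟩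
      exact fun h => h.2.not_ge ((s.le_max' b' hb').trans hta.le)
    · refine ⟨t, Finset.mem_insert_of_mem ht, a, Finset.mem_insert_self a s, hta,
        ⟨htx, hx.2.trans hb₁a⟩, Finset.mem_insert_self _ _,
        Finset.forall_mem_insert _ _ _ |>.2 ⟨fun h => h.2.false, fun c hc h => ?_⟩⟩
      exact h.1.not_ge (s.le_max' c hc)

theorem exists_Icc_succ_mem {α : Type*} [LinearOrder α] (x : ℕ → α) {u : α} :
    ∀ N, u ∈ Icc (x 0) (x (N + 1)) → ∃ i ≤ N, u ∈ Icc (x i) (x (i + 1))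
  | 0, hu => ⟨0, le_rfl, hu⟩
  | N + 1, hu => by
    rcases le_or_gt u (x (N + 1)) with h | h
    · obtain ⟨i, hi, hui⟩ := exists_Icc_succ_mem x N ⟨hu.1, h⟩
      exact ⟨i, hi.trans N.le_succ, hui⟩
    · exact ⟨N + 1, le_rfl, h.le, hu.2⟩

theorem snd_eq_of_mem_segment {a b p : ℝ × ℝ} (hab : a.1 ≠ b.1) (hp : p ∈ segment ℝ a b) :
    p.2 = a.2 + (p.1 - a.1) * ((b.2 - a.2) / (b.1 - a.1)) := by
  rw [segment_eq_image] at hp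
  obtain ⟨t, -, rfl⟩ := hp
  have : b.1 - a.1 ≠ 0 := sub_ne_zero.2 hab.symm
  simp only [Prod.fst_add, Prod.snd_add, Prod.smul_fst, Prod.smul_snd, smul_eq_mul]
  field_simp
  ring

theorem fst_injOn_segment {a b : ℝ × ℝ} (hab : a.1 ≠ b.1) : InjOn Prod.fst (segment ℝ a b) :=
  fun p hp q hq h => Prod.ext h <| by
    rw [snd_eq_of_mem_segment hab hp, snd_eq_of_mem_segment hab hq, h]

theorem fst_image_segment (a b : ℝ × ℝ) : Prod.fst '' segment ℝ a b = segment ℝ a.1 b.1 :=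
  image_segment ℝ (LinearMap.fst ℝ ℝ ℝ).toAffineMap a b

namespace Terrain

variable (T : Terrain)

def domain : Set ℝ := Icc (T.v 0).1 (T.v (T.n - 1)).1

variable {T}

theorem fst_v_le_fst_v {i j : ℕ} (hij : i ≤ j) (hj : j < T.n) : (T.v i).1 ≤ (T.v j).1 :=
  hij.eq_or_lt.elim (fun h => h ▸ le_rfl) fun h => (T.mono i j h hj).le

theorem fst_image_edge {i : ℕ} (hi : i + 1 < T.n) :
    Prod.fst '' T.edge i = Icc (T.v i).1 (T.v (i + 1)).1 := by
  rw [edge, fst_image_segment, segment_eq_Icc (T.mono i (i + 1) i.lt_succ_self hi).le]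

theorem Icc_subset_domain {i : ℕ} (hi : i + 1 < T.n) :
    Icc (T.v i).1 (T.v (i + 1)).1 ⊆ T.domain :=
  Icc_subset_Icc (fst_v_le_fst_v i.zero_le (by omega)) (fst_v_le_fst_v (by omega) (by omega))

theorem mem_carrier {p : ℝ × ℝ} : p ∈ T.carrier ↔ ∃ i, i + 1 < T.n ∧ p ∈ T.edge i := by
  simp only [carrier, mem_iUnion, Finset.mem_range, exists_prop]
  exact exists_congr fun i => and_congr_left' (by omega)

theorem fst_mem_domain {p : ℝ × ℝ} (hp : p ∈ T.carrier) : p.1 ∈ T.domain := by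
  obtain ⟨i, hi, hpi⟩ := mem_carrier.1 hp
  exact Icc_subset_domain hi (fst_image_edge hi ▸ mem_image_of_mem Prod.fst hpi)

theorem exists_edge_of_mem_domain {u : ℝ} (hu : u ∈ T.domain) :
    ∃ i, i + 1 < T.n ∧ u ∈ Icc (T.v i).1 (T.v (i + 1)).1 := by
  have hn : T.n - 1 = T.n - 2 + 1 := by have := T.hn; omega
  rw [domain, hn] at hu
  obtain ⟨i, hi, hui⟩ := exists_Icc_succ_mem (fun j => (T.v j).1) (T.n - 2) hu
  exact ⟨i, by have := T.hn; omega, hui⟩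

theorem eq_of_mem_carrier_of_fst_eq {p q : ℝ × ℝ} (hp : p ∈ T.carrier) (hq : q ∈ T.carrier)
    (hpq : p.1 = q.1) : p = q := by
  obtain ⟨i, hi, hpi⟩ := mem_carrier.1 hp
  obtain ⟨j, hj, hqj⟩ := mem_carrier.1 hq
  wlog hij : i ≤ j generalizing p q i j
  · exact (this hq hp hpq.symm j hj hqj i hi hpi (by omega)).symm
  have hne : ∀ k, k + 1 < T.n → (T.v k).1 ≠ (T.v (k + 1)).1 :=
    fun k hk => (T.mono k (k + 1) k.lt_succ_self hk).ne
  rcases hij.eq_or_lt with rfl | hij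
  · exact fst_injOn_segment (hne i hi) hpi hqj hpq
  have hp1 := (fst_image_edge hi ▸ mem_image_of_mem Prod.fst hpi : p.1 ∈ _)
  have hq1 := (fst_image_edge hj ▸ mem_image_of_mem Prod.fst hqj : q.1 ∈ _)
  have hij' : (T.v (i + 1)).1 ≤ (T.v j).1 := fst_v_le_fst_v hij (by omega)
  have hji : j = i + 1 := by
    by_contra h
    have := T.mono (i + 1) j (by omega) (by omega)
    linarith [hp1.2, hq1.1]
  subst hji
  have hpv : p = T.v (i + 1) :=
    fst_injOn_segment (hne i hi) hpi (right_mem_segment ℝ _ _) (by linarith [hp1.2, hq1.1])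
  have hqv : q = T.v (i + 1) :=
    fst_injOn_segment (hne (i + 1) hj) hqj (left_mem_segment ℝ _ _) (by linarith [hp1.2, hq1.1])
  rw [hpv, hqv]

variable (T) in
/-- The `y` with `(u, y) ∈ T` (a singleton's `sSup`); junk value `0` off the domain. -/
noncomputable def height (u : ℝ) : ℝ := sSup {y | (u, y) ∈ T.carrier}

theorem height_eq {u y : ℝ} (h : (u, y) ∈ T.carrier) : T.height u = y := by
  have : {y' | (u, y') ∈ T.carrier} = {y} := eq_singleton_iff_unique_mem.2
    ⟨h, fun y' hy' => congrArg Prod.snd (eq_of_mem_carrier_of_fst_eq hy' h rfl)⟩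
  rw [height, this, csSup_singleton]

theorem mem_carrier_iff_height {p : ℝ × ℝ} :
    p ∈ T.carrier ↔ p.1 ∈ T.domain ∧ p.2 = T.height p.1 := by
  refine ⟨fun hp => ⟨fst_mem_domain hp, (height_eq hp).symm⟩, fun ⟨hp, hph⟩ => ?_⟩
  obtain ⟨i, hi, hpi⟩ := exists_edge_of_mem_domain hp
  obtain ⟨q, hq, hqp⟩ := (fst_image_edge hi).symm ▸ hpi
  have hqT := mem_carrier.2 ⟨i, hi, hq⟩
  have hpq : p = q := Prod.ext hqp.symm (by rw [hph, ← hqp, height_eq hqT])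
  exact hpq ▸ hqT

theorem height_affine {i : ℕ} (hi : i + 1 < T.n) :
    ∃ α β : ℝ, ∀ u ∈ Icc (T.v i).1 (T.v (i + 1)).1, T.height u = α + β * u := by
  set σ := ((T.v (i + 1)).2 - (T.v i).2) / ((T.v (i + 1)).1 - (T.v i).1)
  refine ⟨(T.v i).2 - (T.v i).1 * σ, σ, fun u hu => ?_⟩
  obtain ⟨q, hq, rfl⟩ := (fst_image_edge hi).symm ▸ hu
  rw [height_eq (mem_carrier.2 ⟨i, hi, hq⟩ : (q.1, q.2) ∈ T.carrier),
    snd_eq_of_mem_segment (T.mono i (i + 1) i.lt_succ_self hi).ne hq]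
  ring

theorem sees_iff_graphSees {a x : ℝ} (ha : a ∈ T.domain) (hx : x ∈ T.domain) :
    T.sees (a, T.height a) (x, T.height x) ↔ GraphSees T.height a x := by
  simp only [sees, segment_eq_image', forall_mem_image]
  refine forall₂_congr fun s hs => ?_
  have hmem : a + s * (x - a) ∈ T.domain := (convex_Icc _ _).add_smul_sub_mem ha hx hs
  constructor
  · intro h
    simpa using h (a + s * (x - a), T.height (a + s * (x - a)))
      (mem_carrier_iff_height.2 ⟨hmem, rfl⟩) (by simp)
  · intro h t ht hts
    rw [(mem_carrier_iff_height.1 ht).2, hts]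
    simpa using h

variable (T) in
def seenOn (g : ℝ × ℝ) (i : ℕ) : Set ℝ :=
  {x ∈ Icc (T.v i).1 (T.v (i + 1)).1 | GraphSees T.height g.1 x}

variable (T) in
noncomputable def edgeBreakpoints (g : ℝ × ℝ) (i : ℕ) : Finset ℝ :=
  {sInf (T.seenOn g i), sSup (T.seenOn g i)}

open Classical in
variable (T) in
/-- Filtered to the domain since `sInf` and `sSup` of an empty `seenOn` are junk. -/
noncomputable def breakpoints (G : Finset (ℝ × ℝ)) : Finset ℝ :=
  ((Finset.range T.n).image (fun j => (T.v j).1) ∪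
    G.biUnion fun g => (Finset.range (T.n - 1)).biUnion (T.edgeBreakpoints g)).filter
      (· ∈ T.domain)

theorem sees_of_sees_midpoint {g : ℝ × ℝ} (hg : g ∈ T.carrier) {i : ℕ} (hi : i + 1 < T.n)
    {b b' : ℝ} (hbb' : b < b') (hsub : Icc b b' ⊆ Icc (T.v i).1 (T.v (i + 1)).1)
    (hfree : ∀ c ∈ T.edgeBreakpoints g i, c ∉ Ioo b b')
    (hmid : T.sees g ((b + b') / 2, T.height ((b + b') / 2))) {x : ℝ} (hx : x ∈ Icc b b') :
    T.sees g (x, T.height x) := by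
  rcases g with ⟨a, y⟩
  obtain ⟨ha, rfl⟩ : a ∈ T.domain ∧ y = T.height a := mem_carrier_iff_height.1 hg
  obtain ⟨α, β, hαβ⟩ := height_affine hi
  obtain ⟨hcl, hoc⟩ : IsClosed (T.seenOn (a, T.height a) i) ∧
      (T.seenOn (a, T.height a) i).OrdConnected :=
    GraphSees.isClosed_ordConnected hαβ a
  have hm : (b + b') / 2 ∈ Ioo b b' := ⟨by linarith, by linarith⟩
  have hmS : (b + b') / 2 ∈ T.seenOn (a, T.height a) i := ⟨hsub (Ioo_subset_Icc_self hm),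
    (sees_iff_graphSees ha (Icc_subset_domain hi (hsub (Ioo_subset_Icc_self hm)))).1 hmid⟩
  have hxS := Icc_subset_of_csInf_csSup_notMem_Ioo hcl hoc ⟨_, fun _ h => h.1.1⟩
    ⟨_, fun _ h => h.1.2⟩ hmS hm (hfree _ (Finset.mem_insert_self _ _))
    (hfree _ (Finset.mem_insert_of_mem (Finset.mem_singleton_self _))) hx
  exact (sees_iff_graphSees ha (Icc_subset_domain hi hxS.1)).2 hxS.2

theorem exists_edge_of_forall_notMem_Ioo {b b' : ℝ} (hb : b ∈ T.domain) (hb' : b' ∈ T.domain)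
    (hbb' : b < b') (hfree : ∀ j < T.n, (T.v j).1 ∉ Ioo b b') :
    ∃ i, i + 1 < T.n ∧ Icc b b' ⊆ Icc (T.v i).1 (T.v (i + 1)).1 := by
  have hm : (b + b') / 2 ∈ T.domain := ordConnected_Icc.out hb hb' ⟨by linarith, by linarith⟩
  obtain ⟨i, hi, hmi⟩ := exists_edge_of_mem_domain hm
  refine ⟨i, hi, Icc_subset_Icc ?_ ?_⟩
  · exact not_lt.1 fun h => hfree i (by omega) ⟨h, hmi.1.trans_lt (by linarith)⟩
  · exact not_lt.1 fun h => hfree (i + 1) hi ⟨(by linarith : b < _).trans_le hmi.2, h⟩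

theorem card_breakpoints_le (G : Finset (ℝ × ℝ)) :
    (T.breakpoints G).card ≤ T.n * (2 * G.card + 1) := by
  classical
  calc (T.breakpoints G).card
      ≤ ((Finset.range T.n).image (fun j => (T.v j).1)).card +
        (G.biUnion fun g => (Finset.range (T.n - 1)).biUnion (T.edgeBreakpoints g)).card :=
        (Finset.card_filter_le _ _).trans (Finset.card_union_le _ _)
    _ ≤ T.n + G.card * ((T.n - 1) * 2) := by
        refine add_le_add (Finset.card_image_le.trans (by simp)) ?_
        refine Finset.card_biUnion_le_card_mul _ _ _ fun g _ => ?_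
        refine (Finset.card_biUnion_le_card_mul _ _ _ fun i _ => Finset.card_le_two).trans ?_
        simp
    _ ≤ T.n * (2 * G.card + 1) := by
        have : T.n - 1 ≤ T.n := Nat.sub_le _ _
        nlinarith

theorem breakpoints_subset_domain (G : Finset (ℝ × ℝ)) : ↑(T.breakpoints G) ⊆ T.domain := by
  classical
  exact fun _ hc => (Finset.mem_filter.1 hc).2

theorem fst_v_mem_domain {j : ℕ} (hj : j < T.n) : (T.v j).1 ∈ T.domain :=
  ⟨fst_v_le_fst_v j.zero_le hj, fst_v_le_fst_v (by omega) (by omega)⟩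

theorem fst_v_mem_breakpoints (G : Finset (ℝ × ℝ)) {j : ℕ} (hj : j < T.n) :
    (T.v j).1 ∈ T.breakpoints G := by
  classical
  exact Finset.mem_filter.2 ⟨Finset.mem_union_left _
    (Finset.mem_image_of_mem _ (Finset.mem_range.2 hj)), fst_v_mem_domain hj⟩

theorem mem_breakpoints {G : Finset (ℝ × ℝ)} {g : ℝ × ℝ} (hg : g ∈ G) {i : ℕ} (hi : i + 1 < T.n)
    {c : ℝ} (hc : c ∈ T.edgeBreakpoints g i) (hcd : c ∈ T.domain) : c ∈ T.breakpoints G := by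
  classical
  refine Finset.mem_filter.2 ⟨Finset.mem_union_right _ ?_, hcd⟩
  exact Finset.mem_biUnion.2 ⟨g, hg, Finset.mem_biUnion.2 ⟨i, Finset.mem_range.2 (by omega), hc⟩⟩

theorem exists_witnesses {G : Finset (ℝ × ℝ)} (hG : ↑G ⊆ T.carrier) :
    ∃ W : Finset (ℝ × ℝ), ↑W ⊆ T.carrier ∧ W.card ≤ T.n * (2 * G.card + 1) - 1 ∧
      ∀ w ∈ T.carrier, ∃ w' ∈ W,
        {g : ℝ × ℝ | g ∈ G ∧ T.sees g w'} ⊆ {g : ℝ × ℝ | g ∈ G ∧ T.sees g w} := by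
  have hn := T.hn
  have hBd := T.breakpoints_subset_domain G
  obtain ⟨M, hMcard, hMB, hgap⟩ := exists_gap_midpoints (T.breakpoints G)
  refine ⟨M.image fun m => (m, T.height m), ?_, ?_, ?_⟩
  · intro p hp
    obtain ⟨m, hm, rfl⟩ := Finset.mem_image.1 hp
    obtain ⟨b, hb, b', hb', hmb⟩ := hMB m hm
    exact mem_carrier_iff_height.2 ⟨ordConnected_Icc.out (hBd hb) (hBd hb') hmb, rfl⟩
  · exact Finset.card_image_le.trans
      (hMcard.trans (Nat.sub_le_sub_right (T.card_breakpoints_le G) 1))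
  intro w hw
  obtain ⟨b, hb, b', hb', hbb', hwb, hmid, hfree⟩ :=
    hgap _ (T.fst_v_mem_breakpoints G (j := 0) (by omega))
      _ (T.fst_v_mem_breakpoints G (j := T.n - 1) (by omega))
      (T.mono 0 (T.n - 1) (by omega) (by omega)) w.1 (fst_mem_domain hw)
  obtain ⟨i, hi, hsub⟩ := exists_edge_of_forall_notMem_Ioo (hBd hb) (hBd hb') hbb'
    fun j hj => hfree _ (T.fst_v_mem_breakpoints G hj)
  refine ⟨_, Finset.mem_image_of_mem _ hmid, fun g ⟨hgG, hsees⟩ => ⟨hgG, ?_⟩⟩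
  rw [show w = (w.1, T.height w.1) from Prod.ext rfl (mem_carrier_iff_height.1 hw).2]
  refine sees_of_sees_midpoint (hG hgG) hi hbb' hsub (fun c hc hcI => hfree c ?_ hcI) hsees hwb
  exact mem_breakpoints hgG hi hc
    (ordConnected_Icc.out (hBd hb) (hBd hb') (Ioo_subset_Icc_self hcI))

theorem visSet_subset_carrier (C : Set (ℝ × ℝ)) : T.visSet C ⊆ T.carrier :=
  iUnion₂_subset fun _ _ => sep_subset _ _

theorem visSet_eq_carrier_of_witnesses {G W C : Set (ℝ × ℝ)}
    (hW : ∀ w ∈ T.carrier, ∃ w' ∈ W,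
      {g : ℝ × ℝ | g ∈ G ∧ T.sees g w'} ⊆ {g : ℝ × ℝ | g ∈ G ∧ T.sees g w})
    (hCG : C ⊆ G) (hWC : W ⊆ T.visSet C) : T.visSet C = T.carrier := by
  refine (visSet_subset_carrier C).antisymm fun w hw => ?_
  obtain ⟨w', hw'W, hsub⟩ := hW w hw
  obtain ⟨g, hgC, -, hgw'⟩ := mem_iUnion₂.1 (hWC hw'W)
  exact mem_iUnion₂.2 ⟨g, hgC, hw, (hsub ⟨hCG hgC, hgw'⟩).2⟩

theorem OPT_eq_of_forall_cover {G W : Set (ℝ × ℝ)} (hW : W ⊆ T.carrier)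
    (hcov : ∀ C : Finset (ℝ × ℝ), ↑C ⊆ G → W ⊆ T.visSet ↑C → T.carrier ⊆ T.visSet ↑C) :
    T.OPT G W = T.OPT G T.carrier := by
  unfold OPT
  congr 1
  ext k
  exact ⟨fun ⟨C, hCG, hWC, hk⟩ => ⟨C, hCG, hcov C hCG hWC, hk⟩,
    fun ⟨C, hCG, hTC, hk⟩ => ⟨C, hCG, hW.trans hTC, hk⟩⟩

theorem nonempty_of_visSet_eq_carrier {C : Set (ℝ × ℝ)} (h : T.visSet C = T.carrier) :
    C.Nonempty := by
  have hv : T.v 0 ∈ T.visSet C :=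
    h ▸ mem_carrier.2 ⟨0, by have := T.hn; omega, left_mem_segment ℝ _ _⟩
  obtain ⟨g, hg, -⟩ := mem_iUnion₂.1 hv
  exact ⟨g, hg⟩

end Terrain

/-- For any finite guard candidate set `G` with `V(G) = T` there is a
witness set `W` of size at most `4·n·|G| + 1` such that (i) every point of `T` has a
witness in `W` whose set of seeing guards is a subset of its own, (ii) any `C ⊆ G`
covering `W` covers `T`, and (iii) `OPT(G, W) = OPT(G, T)`. -/
theorem witness_discretization (T : Terrain) (G : Finset (ℝ × ℝ))
    (hG : ↑G ⊆ T.carrier) (hGcov : T.visSet ↑G = T.carrier) :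
    ∃ W : Finset (ℝ × ℝ), ↑W ⊆ T.carrier ∧ W.card ≤ 4 * T.n * G.card + 1 ∧
      (∀ w ∈ T.carrier, ∃ w' ∈ W,
        {g : ℝ × ℝ | g ∈ G ∧ T.sees g w'} ⊆ {g : ℝ × ℝ | g ∈ G ∧ T.sees g w}) ∧
      (∀ C : Finset (ℝ × ℝ), C ⊆ G → ↑W ⊆ T.visSet ↑C → T.visSet ↑C = T.carrier) ∧
      T.OPT ↑G ↑W = T.OPT ↑G T.carrier := by
  obtain ⟨W, hWT, hWcard, hW⟩ := T.exists_witnesses hG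
  have hcover : ∀ C : Finset (ℝ × ℝ), C ⊆ G → ↑W ⊆ T.visSet ↑C → T.visSet ↑C = T.carrier :=
    fun C hCG hWC => T.visSet_eq_carrier_of_witnesses (G := ↑G) (W := ↑W) hW
      (Finset.coe_subset.2 hCG) hWC
  refine ⟨W, hWT, ?_, hW, hcover, T.OPT_eq_of_forall_cover hWT fun C hCG hWC =>
    (hcover C (Finset.coe_subset.1 hCG) hWC).ge⟩
  have hGne : G.Nonempty := Finset.coe_nonempty.1 (T.nonempty_of_visSet_eq_carrier hGcov)
  have hn : T.n ≤ T.n * G.card := Nat.le_mul_of_pos_right _ hGne.card_pos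
  calc W.card ≤ T.n * (2 * G.card + 1) - 1 := hWcard
    _ ≤ 4 * T.n * G.card + 1 := by ring_nf; omega
end
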